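/- arXiv:1003.2081 — 2 statements merged into one kernel-verified Lean document; each statement's English description precedes it below -/
import Mathlib

section
/- (Claim 4.1) Every element a ∈ 𝒜 admits a factorization into irreducibles: there is a (possibly empty) finite list a₁, …, aₙ of elements of 𝒜, each irreducible, with a = a₁·a₂·…·aₙ. Here an element p ∈ 𝒜 is called irreducible if p ≠ 1 and whenever p = b·c one has b = 1 or c = 1. -/
/-!
The number of leaves of a term is invariant under the medial law and multiplicative under
substitution, and only the generator has a single leaf. Hence in a product `b · c` with
`b, c ≠ 1` both factors have fewer leaves than the product, and splitting reducible elements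
repeatedly must terminate.
-/

/-- The smallest congruence on the free magma on one generator containing
all instances of the medial law `(w⊕x)⊕(y⊕z) = (w⊕y)⊕(x⊕z)`. -/
inductive MedialRel : FreeMagma PUnit → FreeMagma PUnit → Prop
  | medial (w x y z : FreeMagma PUnit) :
      MedialRel ((w * x) * (y * z)) ((w * y) * (x * z))
  | refl (a : FreeMagma PUnit) : MedialRel a a
  | symm {a b : FreeMagma PUnit} : MedialRel a b → MedialRel b a
  | trans {a b c : FreeMagma PUnit} : MedialRel a b → MedialRel b c → MedialRel a c
  | mul {a b c d : FreeMagma PUnit} :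
      MedialRel a b → MedialRel c d → MedialRel (a * c) (b * d)

/-- The noncommutative natural numbers `𝒜 := M/∼`. -/
def NCN : Type := Quot MedialRel

/-- The induced binary operation `⊕` on `𝒜`. -/
def NCN.oplus : NCN → NCN → NCN :=
  Quot.map₂ (· * ·) (fun a _ _ h => MedialRel.mul (MedialRel.refl a) h)
    (fun _ _ b h => MedialRel.mul h (MedialRel.refl b))

/-- The class of the generator `1` in `𝒜`. -/
def NCN.one : NCN := Quot.mk _ (FreeMagma.of PUnit.unit)

/-- Substitution multiplication on `M`: `a · b` is the image of `a` under the unique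
magma homomorphism `M → M` sending the generator to `b`. -/
def FreeMagma.subMul (a b : FreeMagma PUnit) : FreeMagma PUnit :=
  (FreeMagma.lift fun _ => b) a

theorem MedialRel.subMul_left {a a' : FreeMagma PUnit} (b : FreeMagma PUnit)
    (h : MedialRel a a') : MedialRel (a.subMul b) (a'.subMul b) := by
  induction h with
  | medial w x y z =>
      simp only [FreeMagma.subMul, map_mul]
      exact MedialRel.medial _ _ _ _
  | refl a => exact MedialRel.refl _
  | symm _ ih => exact MedialRel.symm ih
  | trans _ _ ih1 ih2 => exact MedialRel.trans ih1 ih2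
  | mul _ _ ih1 ih2 =>
      simp only [FreeMagma.subMul, map_mul] at *
      exact MedialRel.mul ih1 ih2

theorem MedialRel.subMul_right (a : FreeMagma PUnit) {b b' : FreeMagma PUnit}
    (h : MedialRel b b') : MedialRel (a.subMul b) (a.subMul b') := by
  induction a with
  | ih1 u => simpa [FreeMagma.subMul] using h
  | ih2 x y ihx ihy =>
      simp only [FreeMagma.subMul, map_mul] at *
      exact MedialRel.mul ihx ihy

/-- The induced multiplication on `𝒜`. -/
def NCN.mul : NCN → NCN → NCN :=
  Quot.map₂ FreeMagma.subMul (fun a _ _ h => MedialRel.subMul_right a h)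
    (fun _ _ b h => MedialRel.subMul_left b h)

/-- An element of `𝒜` is irreducible if it is not `1` and cannot be written as a
product of two elements both different from `1`. -/
def NCN.Irred (p : NCN) : Prop :=
  p ≠ NCN.one ∧ ∀ b c : NCN, p = NCN.mul b c → b = NCN.one ∨ c = NCN.one

namespace FreeMagma

theorem exists_eq_of_of_length_eq_one {α : Type*} {a : FreeMagma α} (h : a.length = 1) :
    ∃ x, a = of x := by
  cases a with
  | of x => exact ⟨x, rfl⟩
  | mul x y =>
    have := x.length_pos
    have := y.length_pos
    simp only [length] at h
    omega

theorem length_subMul (a b : FreeMagma PUnit) : (a.subMul b).length = a.length * b.length := by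
  induction a with
  | ih1 u => simp [subMul]
  | ih2 x y ihx ihy =>
    simp only [subMul, map_mul] at ihx ihy ⊢
    simp only [length, ihx, ihy, Nat.add_mul]

theorem subMul_assoc (a b c : FreeMagma PUnit) :
    (a.subMul b).subMul c = a.subMul (b.subMul c) := by
  induction a with
  | ih1 u => rfl
  | ih2 x y ihx ihy =>
    simp only [subMul, map_mul] at ihx ihy ⊢
    rw [ihx, ihy]

theorem subMul_of (a : FreeMagma PUnit) : a.subMul (of PUnit.unit) = a := by
  induction a with
  | ih1 u => rfl
  | ih2 x y ihx ihy =>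
    simp only [subMul, map_mul] at ihx ihy ⊢
    rw [ihx, ihy]

end FreeMagma

theorem MedialRel.length_eq {a b : FreeMagma PUnit} (h : MedialRel a b) : a.length = b.length := by
  induction h with
  | medial w x y z => simp only [FreeMagma.length]; omega
  | refl a => rfl
  | symm _ ih => exact ih.symm
  | trans _ _ ih₁ ih₂ => exact ih₁.trans ih₂
  | mul _ _ ih₁ ih₂ => simp only [FreeMagma.length, ih₁, ih₂]

namespace NCN

def length : NCN → ℕ := Quot.lift FreeMagma.length fun _ _ h => h.length_eq

theorem length_mul (a b : NCN) : (mul a b).length = a.length * b.length := by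
  induction a using Quot.ind
  induction b using Quot.ind
  exact FreeMagma.length_subMul _ _

theorem length_pos (a : NCN) : 0 < a.length := by
  induction a using Quot.ind
  exact FreeMagma.length_pos _

theorem one_lt_length {a : NCN} (ha : a ≠ one) : 1 < a.length := by
  induction a using Quot.ind with
  | _ x =>
    have hx := x.length_pos
    have : x.length ≠ 1 := fun h => by
      obtain ⟨_, rfl⟩ := FreeMagma.exists_eq_of_of_length_eq_one h
      exact ha rfl
    change 1 < x.length
    omega

theorem length_lt_length_mul_left (b : NCN) {c : NCN} (hc : c ≠ one) :
    b.length < (mul b c).length := by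
  rw [length_mul]
  exact (Nat.lt_mul_iff_one_lt_right b.length_pos).2 (one_lt_length hc)

theorem length_lt_length_mul_right {b : NCN} (c : NCN) (hb : b ≠ one) :
    c.length < (mul b c).length := by
  rw [length_mul]
  exact (Nat.lt_mul_iff_one_lt_left c.length_pos).2 (one_lt_length hb)

theorem mul_assoc (a b c : NCN) : mul (mul a b) c = mul a (mul b c) := by
  induction a using Quot.ind
  induction b using Quot.ind
  induction c using Quot.ind
  exact congrArg _ (FreeMagma.subMul_assoc _ _ _)

theorem one_mul (a : NCN) : mul one a = a := by
  induction a using Quot.ind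
  rfl

theorem mul_one (a : NCN) : mul a one = a := by
  induction a using Quot.ind
  exact congrArg _ (FreeMagma.subMul_of _)

theorem foldr_mul_append (L₁ L₂ : List NCN) :
    (L₁ ++ L₂).foldr mul one = mul (L₁.foldr mul one) (L₂.foldr mul one) := by
  induction L₁ with
  | nil => exact (one_mul _).symm
  | cons p L ih => rw [List.cons_append, List.foldr_cons, List.foldr_cons, ih, mul_assoc]

theorem exists_mul_eq_of_not_irred {a : NCN} (ha₁ : a ≠ one) (ha : ¬ a.Irred) :
    ∃ b c, a = mul b c ∧ b ≠ one ∧ c ≠ one := by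
  simpa [Irred, ha₁] using ha

end NCN

/-- Claim 4.1: every element of `𝒜` is a (possibly empty) product of
irreducibles, the empty product being `1`. -/
theorem ncn_factorization_into_irreducibles (a : NCN) :
    ∃ L : List NCN, (∀ p ∈ L, NCN.Irred p) ∧ a = L.foldr NCN.mul NCN.one := by
  by_cases ha₁ : a = NCN.one
  · exact ⟨[], by simp, ha₁⟩
  by_cases ha : a.Irred
  · exact ⟨[a], by simpa using ha, (NCN.mul_one a).symm⟩
  obtain ⟨b, c, habc, hb, hc⟩ := NCN.exists_mul_eq_of_not_irred ha₁ ha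
  obtain ⟨L₁, hL₁, hbL⟩ := ncn_factorization_into_irreducibles b
  obtain ⟨L₂, hL₂, hcL⟩ := ncn_factorization_into_irreducibles c
  refine ⟨L₁ ++ L₂, fun p hp => (List.mem_append.1 hp).elim (hL₁ p) (hL₂ p), ?_⟩
  rw [NCN.foldr_mul_append, ← hbL, ← hcL, habc]
termination_by a.length
decreasing_by
  · exact habc ▸ NCN.length_lt_length_mul_left b hc
  · exact habc ▸ NCN.length_lt_length_mul_right c hb
end

section
/- (Claim 5.2) There exists a unique function ℓ : 𝒜 → ℤ[q] (integer polynomials in one variable q) satisfying ℓ(1) = 1 and ℓ(a⊕b) = ℓ(a) + q·ℓ(b) for all a, b ∈ 𝒜. -/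
/-!
`x ⊕ y := x + q y` is itself a medial operation on `ℤ[q]`, so evaluating magma words
with it is invariant under `∼` and gives `ℓ`; uniqueness holds because `1` generates `𝒜` under `⊕`.
-/

namespace NCN

variable {β : Type*} (e : β) (op : β → β → β)

@[elab_as_elim]
theorem induction_on {P : NCN → Prop} (a : NCN) (one : P NCN.one)
    (oplus : ∀ a b, P a → P b → P (NCN.oplus a b)) : P a := by
  induction a using Quot.ind with
  | mk m =>
    induction m with
    | ih1 => exact one
    | ih2 x y hx hy => exact oplus _ _ hx hy

def evalWord : FreeMagma PUnit → β :=
  fun m => FreeMagma.recOnMul m (fun _ => e) (fun _ _ => op)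

theorem evalWord_eq_of_medialRel
    (hop : ∀ w x y z, op (op w x) (op y z) = op (op w y) (op x z))
    {a b : FreeMagma PUnit} (h : MedialRel a b) : evalWord e op a = evalWord e op b := by
  induction h with
  | medial w x y z => exact hop _ _ _ _
  | refl => rfl
  | symm _ ih => exact ih.symm
  | trans _ _ ih₁ ih₂ => exact ih₁.trans ih₂
  | mul _ _ ih₁ ih₂ => exact congrArg₂ op ih₁ ih₂

variable (hop : ∀ w x y z, op (op w x) (op y z) = op (op w y) (op x z))

def lift : NCN → β :=
  Quot.lift (evalWord e op) fun _ _ => evalWord_eq_of_medialRel e op hop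

theorem lift_one : lift e op hop NCN.one = e := rfl

theorem lift_oplus (a b : NCN) :
    lift e op hop (NCN.oplus a b) = op (lift e op hop a) (lift e op hop b) := by
  induction a using Quot.ind
  induction b using Quot.ind
  rfl

variable {e op}

theorem hom_ext {f g : NCN → β} (hf_one : f NCN.one = e) (hg_one : g NCN.one = e)
    (hf : ∀ a b, f (NCN.oplus a b) = op (f a) (f b))
    (hg : ∀ a b, g (NCN.oplus a b) = op (g a) (g b)) : f = g := by
  funext a
  induction a using NCN.induction_on with
  | one => rw [hf_one, hg_one]
  | oplus a b ha hb => rw [hf, hg, ha, hb]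

end NCN

/-- Claim 5.2: there is a unique function `ℓ : 𝒜 → ℤ[q]` with
`ℓ(1) = 1` and `ℓ(a⊕b) = ℓ(a) + q·ℓ(b)`. -/
theorem ncn_exists_unique_ell :
    ∃! ell : NCN → Polynomial ℤ,
      ell NCN.one = 1 ∧
      ∀ a b : NCN, ell (NCN.oplus a b) = ell a + Polynomial.X * ell b := by
  let op : Polynomial ℤ → Polynomial ℤ → Polynomial ℤ := fun p r => p + .X * r
  have hmedial : ∀ w x y z, op (op w x) (op y z) = op (op w y) (op x z) := by
    intros; simp only [op]; ring
  refine ⟨NCN.lift 1 op hmedial, ⟨NCN.lift_one _ _ hmedial, NCN.lift_oplus _ _ hmedial⟩, ?_⟩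
  rintro ell ⟨h_one, h_oplus⟩
  exact NCN.hom_ext h_one (NCN.lift_one _ _ hmedial) h_oplus (NCN.lift_oplus _ _ hmedial)
end
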